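/- arXiv:2605.05645 — 7 statements merged into one kernel-verified Lean document; each statement's English description precedes it below -/
import Mathlib

section
/- Let s ≥ 1, let M be an s×s real lower triangular matrix, and suppose the symmetric part S(M) := (M + Mᵀ)/2 satisfies xᵀ S(M) x ≥ λ |x|² for all x ∈ ℝˢ, for some constant λ > 0. Then for any vectors v₁, …, v_s in a real inner product space and any 1 ≤ k ≤ s, one has Σ_{i=1}^{k} Σ_{j=1}^{i} M_{ij} ⟨v_j, v_i⟩ ≥ λ Σ_{i=1}^{k} ‖v_i‖². -/
/-!
Write the `v i` in coordinates with respect to an orthonormal basis of their span: then every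
inner product `⟪v j, v i⟫` is a sum over coordinates of products of reals, so the hypothesis on
real vectors, applied to each coordinate vector and summed, carries over to vectors in `E`.
Instead of passing to a leading principal submatrix (and Cauchy interlacing), apply this to the
family `v` with the entries of index `≥ k` replaced by `0`; symmetry of the inner product and
lower triangularity of `M` then turn the symmetric-part form into the triangular sum.
-/

open scoped RealInnerProductSpace

open Finset

theorem exists_inner_eq_sum_mul {ι E : Type*} [Finite ι] [NormedAddCommGroup E]
    [InnerProductSpace ℝ E] (w : ι → E) :
    ∃ (N : ℕ) (c : ι → Fin N → ℝ), ∀ i j, ⟪w i, w j⟫ = ∑ m, c i m * c j m := by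
  let F := Submodule.span ℝ (Set.range w)
  have : FiniteDimensional ℝ F := .span_of_finite ℝ (Set.finite_range w)
  let b := stdOrthonormalBasis ℝ F
  let u (i : ι) : F := ⟨w i, Submodule.subset_span (Set.mem_range_self i)⟩
  refine ⟨_, fun i => b.repr (u i), fun i j => ?_⟩
  change ⟪u i, u j⟫ = _
  rw [← b.repr.inner_map_map, PiLp.inner_apply]
  exact sum_congr rfl fun m _ => mul_comm _ _

theorem mul_sum_norm_sq_le_sum_sum_mul_inner {ι E : Type*} [Fintype ι] [NormedAddCommGroup E]
    [InnerProductSpace ℝ E] (Q : ι → ι → ℝ) (lam : ℝ)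
    (hQ : ∀ x : ι → ℝ, lam * ∑ i, x i ^ 2 ≤ ∑ i, ∑ j, Q i j * x i * x j) (w : ι → E) :
    lam * ∑ i, ‖w i‖ ^ 2 ≤ ∑ i, ∑ j, Q i j * ⟪w i, w j⟫ := by
  obtain ⟨N, c, hc⟩ := exists_inner_eq_sum_mul w
  have hnorm (i : ι) : ‖w i‖ ^ 2 = ∑ m, c i m ^ 2 := by
    rw [← real_inner_self_eq_norm_sq, hc]
    simp only [sq]
  calc lam * ∑ i, ‖w i‖ ^ 2 = ∑ m, lam * ∑ i, c i m ^ 2 := by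
        simp only [hnorm, ← mul_sum]
        rw [sum_comm]
    _ ≤ ∑ m, ∑ i, ∑ j, Q i j * c i m * c j m := sum_le_sum fun m _ => hQ (c · m)
    _ = ∑ i, ∑ j, Q i j * ⟪w i, w j⟫ := by
        simp only [hc, mul_sum, mul_assoc]
        rw [sum_comm]
        exact sum_congr rfl fun i _ => sum_comm

theorem sum_sum_add_transpose_div_two_mul {ι : Type*} [Fintype ι] (M g : ι → ι → ℝ)
    (hg : ∀ i j, g i j = g j i) :
    ∑ i, ∑ j, (M i j + M j i) / 2 * g i j = ∑ i, ∑ j, M i j * g i j := by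
  have hswap : ∑ i, ∑ j, M j i * g i j = ∑ i, ∑ j, M i j * g i j := by
    rw [sum_comm]
    simp only [hg]
  simp only [add_div, add_mul, sum_add_distrib, div_mul_eq_mul_div, ← sum_div, hswap]
  ring

theorem sum_sum_eq_sum_sum_Iic_of_lowerTriangular {ι : Type*} [Fintype ι] [LinearOrder ι]
    [LocallyFiniteOrderBot ι] (M g : ι → ι → ℝ) (hlow : ∀ i j, i < j → M i j = 0) :
    ∑ i, ∑ j, M i j * g i j = ∑ i, ∑ j ∈ Iic i, M i j * g i j := by
  refine sum_congr rfl fun i _ => (sum_subset (subset_univ _) fun j _ hj => ?_).symm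
  rw [hlow i j (by simpa using hj), zero_mul]

theorem ierk_quadratic_form_lower_bound_general
    {E : Type*} [NormedAddCommGroup E] [InnerProductSpace ℝ E]
    (s : ℕ) (M : Matrix (Fin s) (Fin s) ℝ)
    (hlow : ∀ i j : Fin s, i < j → M i j = 0)
    (lam : ℝ)
    (hquad : ∀ x : Fin s → ℝ,
      lam * ∑ i, (x i) ^ 2 ≤ ∑ i, ∑ j, ((M i j + M j i) / 2) * x i * x j)
    (v : Fin s → E) (k : ℕ) :
    lam * ∑ i ∈ Finset.univ.filter (fun i : Fin s => (i : ℕ) < k), ‖v i‖ ^ 2 ≤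
      ∑ i ∈ Finset.univ.filter (fun i : Fin s => (i : ℕ) < k),
        ∑ j ∈ Finset.Iic i, M i j * ⟪v j, v i⟫ := by
  let w (i : Fin s) : E := if (i : ℕ) < k then v i else 0
  have hnorm : ∑ i ∈ univ.filter (fun i : Fin s => (i : ℕ) < k), ‖v i‖ ^ 2
      = ∑ i, ‖w i‖ ^ 2 := by
    rw [sum_filter]
    exact sum_congr rfl fun i _ => by by_cases hi : (i : ℕ) < k <;> simp [w, hi]
  have hform : ∑ i, ∑ j, (M i j + M j i) / 2 * ⟪w i, w j⟫
      = ∑ i ∈ univ.filter (fun i : Fin s => (i : ℕ) < k), ∑ j ∈ Iic i, M i j * ⟪v j, v i⟫ := by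
    rw [sum_sum_add_transpose_div_two_mul M _ fun i j => real_inner_comm _ _,
      sum_sum_eq_sum_sum_Iic_of_lowerTriangular M _ hlow, sum_filter]
    refine sum_congr rfl fun i _ => ?_
    by_cases hi : (i : ℕ) < k
    · rw [if_pos hi]
      refine sum_congr rfl fun j hj => ?_
      have hj : (j : ℕ) < k := (Fin.le_def.mp (mem_Iic.mp hj)).trans_lt hi
      simp [w, hi, hj, real_inner_comm]
    · simp [w, hi]
  rw [hnorm, ← hform]
  exact mul_sum_norm_sq_le_sum_sum_mul_inner _ lam hquad w

/-- Part (i) of the quadratic-form lemma (Lemma 2.2): if the symmetric part of a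
lower triangular matrix `M` has quadratic form bounded below by `lam` times the
Euclidean norm squared, then the convolution-type quadratic form of vectors in a
real inner product space is bounded below by `lam` times the sum of squared norms. -/
theorem ierk_quadratic_form_lower_bound
    {E : Type*} [NormedAddCommGroup E] [InnerProductSpace ℝ E]
    (s : ℕ) (hs : 1 ≤ s) (M : Matrix (Fin s) (Fin s) ℝ)
    (hlow : ∀ i j : Fin s, i < j → M i j = 0)
    (lam : ℝ) (hlam : 0 < lam)
    (hquad : ∀ x : Fin s → ℝ,
      lam * ∑ i, (x i) ^ 2 ≤ ∑ i, ∑ j, ((M i j + M j i) / 2) * x i * x j)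
    (v : Fin s → E) (k : ℕ) (hk1 : 1 ≤ k) (hks : k ≤ s) :
    lam * ∑ i ∈ Finset.univ.filter (fun i : Fin s => (i : ℕ) < k), ‖v i‖ ^ 2 ≤
      ∑ i ∈ Finset.univ.filter (fun i : Fin s => (i : ℕ) < k),
        ∑ j ∈ Finset.Iic i, M i j * ⟪v j, v i⟫ :=
  ierk_quadratic_form_lower_bound_general s M hlow lam hquad v k
end

section
/- Let s ≥ 1 and let M be an s×s real lower triangular matrix whose spectral norm (operator norm with respect to the Euclidean norm on ℝˢ) is at most σ > 0. Then for any vectors v₁, …, v_s and u₁, …, u_s in a real inner product space and any 1 ≤ k ≤ s, one has Σ_{i=1}^{k} Σ_{j=1}^{i} M_{ij} ⟨v_j, u_i⟩ ≤ σ (Σ_{i=1}^{k} ‖v_i‖²)^{1/2} (Σ_{i=1}^{k} ‖u_i‖²)^{1/2}. -/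
open scoped RealInnerProductSpace

/-! With `w` the family `v` cut off after index `k`, lower triangularity lets the form be
written as `∑ i < k, ⟪∑ j, M i j • w j, u i⟫`, so Cauchy–Schwarz in `E^s` reduces the claim to
`∑ i ‖∑ j, M i j • w j‖² ≤ σ² ∑ j ‖w j‖²`. The spectral bound says `σ² • 1 - Mᵀ * M` is
positive semidefinite, and the trace of its product with the (positive semidefinite) Gram
matrix of `w` is exactly `σ² ∑ j ‖w j‖² - ∑ i ‖∑ j, M i j • w j‖²`. -/

open Matrix Finset

section
open scoped MatrixOrder ComplexOrder
variable {n 𝕜 : Type*} [Fintype n] [DecidableEq n] [RCLike 𝕜]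

theorem Matrix.PosSemidef.trace_mul_nonneg {A B : Matrix n n 𝕜} (hA : A.PosSemidef)
    (hB : B.PosSemidef) : 0 ≤ (A * B).trace := by
  obtain ⟨C, rfl⟩ := CStarAlgebra.nonneg_iff_eq_star_mul_self.mp hB.nonneg
  rw [star_eq_conjTranspose, ← Matrix.mul_assoc, trace_mul_comm, ← Matrix.mul_assoc]
  exact (hA.mul_mul_conjTranspose_same C).trace_nonneg

end

section
variable {E : Type*} [NormedAddCommGroup E] [InnerProductSpace ℝ E] {m n : Type*} [Fintype m]
  [Fintype n]

theorem Matrix.trace_gram (v : n → E) : (gram ℝ v).trace = ∑ j, ‖v j‖ ^ 2 := by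
  simp [trace]

theorem Matrix.trace_transpose_mul_self_mul_gram (R : Matrix m n ℝ) (v : n → E) :
    (Rᵀ * R * gram ℝ v).trace = ∑ i, ‖∑ j, R i j • v j‖ ^ 2 := by
  rw [Matrix.mul_assoc, trace_mul_comm, trace]
  refine sum_congr rfl fun i _ => ?_
  rw [← real_inner_self_eq_norm_sq, ← star_dotProduct_gram_mulVec, star_trivial, Matrix.mul_assoc]
  rfl

theorem Matrix.posSemidef_smul_one_sub_transpose_mul_self [DecidableEq n] {M : Matrix m n ℝ}
    {c : ℝ} (hM : ∀ x, ∑ i, (M *ᵥ x) i ^ 2 ≤ c * ∑ j, x j ^ 2) :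
    (c • 1 - Mᵀ * M).PosSemidef := by
  refine .of_dotProduct_mulVec_nonneg (by simp [IsHermitian]) fun x => ?_
  rw [star_trivial, sub_mulVec, smul_mulVec, one_mulVec, ← mulVec_mulVec, dotProduct_sub,
    dotProduct_smul, dotProduct_mulVec x Mᵀ, vecMul_transpose, sub_nonneg, smul_eq_mul]
  simpa [dotProduct, sq] using hM x

theorem Matrix.sum_norm_sq_sum_smul_le [DecidableEq n] {M : Matrix m n ℝ}
    {c : ℝ} (hM : ∀ x, ∑ i, (M *ᵥ x) i ^ 2 ≤ c * ∑ j, x j ^ 2) (v : n → E) :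
    ∑ i, ‖∑ j, M i j • v j‖ ^ 2 ≤ c * ∑ j, ‖v j‖ ^ 2 := by
  have := (posSemidef_smul_one_sub_transpose_mul_self hM).trace_mul_nonneg (posSemidef_gram ℝ v)
  rwa [Matrix.sub_mul, trace_sub, Matrix.smul_mul, Matrix.one_mul, trace_smul, trace_gram,
    trace_transpose_mul_self_mul_gram, sub_nonneg] at this

theorem sum_inner_le_sqrt_mul_sqrt {ι : Type*} (s : Finset ι) (w u : ι → E) :
    ∑ i ∈ s, ⟪w i, u i⟫ ≤ √(∑ i ∈ s, ‖w i‖ ^ 2) * √(∑ i ∈ s, ‖u i‖ ^ 2) :=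
  (sum_le_sum fun _ _ => real_inner_le_norm _ _).trans (Real.sum_mul_le_sqrt_mul_sqrt _ _ _)

theorem sum_Iic_mul_inner_eq_inner_sum_smul {ι : Type*} [Fintype ι] [LinearOrder ι]
    [LocallyFiniteOrderBot ι] {a : ι → ℝ} {i : ι} (ha : ∀ j, i < j → a j = 0) {v w : ι → E}
    (hvw : ∀ j ≤ i, w j = v j) (x : E) :
    ∑ j ∈ Iic i, a j * ⟪v j, x⟫ = ⟪∑ j, a j • w j, x⟫ := by
  rw [sum_inner, ← sum_subset (subset_univ (Iic i))]
  · exact sum_congr rfl fun j hj => by rw [real_inner_smul_left, hvw j (mem_Iic.mp hj)]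
  · intro j _ hj
    rw [ha j (not_le.mp (mt mem_Iic.mpr hj)), zero_smul, inner_zero_left]

end

theorem ierk_quadratic_form_cauchy_schwarz_general
    {E : Type*} [NormedAddCommGroup E] [InnerProductSpace ℝ E]
    (s : ℕ) (M : Matrix (Fin s) (Fin s) ℝ)
    (hlow : ∀ i j : Fin s, i < j → M i j = 0)
    (σ : ℝ) (hσpos : 0 < σ)
    (hσ : ∀ x : Fin s → ℝ,
      Real.sqrt (∑ i, (∑ j, M i j * x j) ^ 2) ≤ σ * Real.sqrt (∑ i, (x i) ^ 2))
    (v u : Fin s → E) (k : ℕ) :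
    ∑ i ∈ Finset.univ.filter (fun i : Fin s => (i : ℕ) < k),
        ∑ j ∈ Finset.Iic i, M i j * ⟪v j, u i⟫ ≤
      σ * Real.sqrt (∑ i ∈ Finset.univ.filter (fun i : Fin s => (i : ℕ) < k), ‖v i‖ ^ 2) *
        Real.sqrt (∑ i ∈ Finset.univ.filter (fun i : Fin s => (i : ℕ) < k), ‖u i‖ ^ 2) := by
  set F := univ.filter fun i : Fin s => (i : ℕ) < k
  set w : Fin s → E := fun j => if (j : ℕ) < k then v j else 0
  have hM : ∀ x, ∑ i, (M *ᵥ x) i ^ 2 ≤ σ ^ 2 * ∑ j, x j ^ 2 := fun x => by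
    have := hσ x
    rw [← Real.sqrt_sq hσpos.le, ← Real.sqrt_mul (sq_nonneg σ)] at this
    exact (Real.sqrt_le_sqrt_iff (by positivity)).mp this
  have hw : ∑ j, ‖w j‖ ^ 2 = ∑ j ∈ F, ‖v j‖ ^ 2 := by
    simp [w, F, sum_filter, apply_ite]
  calc ∑ i ∈ F, ∑ j ∈ Iic i, M i j * ⟪v j, u i⟫
      = ∑ i ∈ F, ⟪∑ j, M i j • w j, u i⟫ :=
        sum_congr rfl fun i hi => sum_Iic_mul_inner_eq_inner_sum_smul (hlow i)
          (fun j hj => if_pos ((Fin.le_def.mp hj).trans_lt (mem_filter.mp hi).2)) _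
    _ ≤ √(∑ i ∈ F, ‖∑ j, M i j • w j‖ ^ 2) * √(∑ i ∈ F, ‖u i‖ ^ 2) :=
        sum_inner_le_sqrt_mul_sqrt _ _ _
    _ ≤ √(σ ^ 2 * ∑ j, ‖w j‖ ^ 2) * √(∑ i ∈ F, ‖u i‖ ^ 2) := by
        gcongr
        exact (sum_le_univ_sum_of_nonneg fun _ => by positivity).trans
          (sum_norm_sq_sum_smul_le hM w)
    _ = σ * √(∑ j ∈ F, ‖v j‖ ^ 2) * √(∑ i ∈ F, ‖u i‖ ^ 2) := by
        rw [Real.sqrt_mul' _ (by positivity), Real.sqrt_sq hσpos.le, hw]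

/-- Part (ii) of the quadratic-form lemma (Lemma 2.2): a Cauchy–Schwarz type bound
for the convolution quadratic form of a lower triangular matrix with spectral norm
at most `σ`, applied to vectors in a real inner product space. -/
theorem ierk_quadratic_form_cauchy_schwarz
    {E : Type*} [NormedAddCommGroup E] [InnerProductSpace ℝ E]
    (s : ℕ) (hs : 1 ≤ s) (M : Matrix (Fin s) (Fin s) ℝ)
    (hlow : ∀ i j : Fin s, i < j → M i j = 0)
    (σ : ℝ) (hσpos : 0 < σ)
    (hσ : ∀ x : Fin s → ℝ,
      Real.sqrt (∑ i, (∑ j, M i j * x j) ^ 2) ≤ σ * Real.sqrt (∑ i, (x i) ^ 2))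
    (v u : Fin s → E) (k : ℕ) (hk1 : 1 ≤ k) (hks : k ≤ s) :
    ∑ i ∈ Finset.univ.filter (fun i : Fin s => (i : ℕ) < k),
        ∑ j ∈ Finset.Iic i, M i j * ⟪v j, u i⟫ ≤
      σ * Real.sqrt (∑ i ∈ Finset.univ.filter (fun i : Fin s => (i : ℕ) < k), ‖v i‖ ^ 2) *
        Real.sqrt (∑ i ∈ Finset.univ.filter (fun i : Fin s => (i : ℕ) < k), ‖u i‖ ^ 2) :=
  ierk_quadratic_form_cauchy_schwarz_general s M hlow σ hσpos hσ v u k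
end

section
/- Let s ≥ 1 and let M be an s×s real lower triangular matrix whose spectral norm is at most σ > 0. Let α, β be real numbers with 1 < α, β < ∞ and 1/α + 1/β = 1, and set μ := max{α, β}. Then for any vectors v₁, …, v_s and u₁, …, u_s in a real inner product space and any 1 ≤ k ≤ s, one has Σ_{i=1}^{k} Σ_{j=1}^{i} M_{ij} ⟨v_j, u_i⟩ ≤ k^{1/2 − 1/μ} σ (Σ_{i=1}^{k} ‖v_i‖^α)^{1/α} (Σ_{i=1}^{k} ‖u_i‖^β)^{1/β}. -/
/-!
Put `w i = ∑ j, M i j • v j`. Expanding in an orthonormal basis of the span of the `v j`, the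
spectral bound on `M` holds coordinatewise, so `∑ ‖w i‖² ≤ σ² ∑ ‖v j‖²`, and Cauchy–Schwarz bounds
the bilinear form `∑ ⟪w i, u i⟫` by `σ ‖v‖₂ ‖u‖₂`. Since `M` is lower triangular, the sum over
`j ≤ i < k` is this form for the leading `k × k` block, whose spectral norm is also at most `σ`.
Finally, of two Hölder conjugates one exponent `p` is at most `2` and the other `q` at least `2`,
so `‖·‖₂ ≤ ‖·‖_p` and, by the power mean inequality, `‖·‖₂ ≤ k ^ (1/2 - 1/q) ‖·‖_q`.
-/

open scoped RealInnerProductSpace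
open Finset

section LpNorms

variable {ι : Type*} (s : Finset ι) {f : ι → ℝ}

theorem Finset.sum_rpow_le_rpow_sum (hf : ∀ i ∈ s, 0 ≤ f i) {p : ℝ} (hp : 1 ≤ p) :
    ∑ i ∈ s, f i ^ p ≤ (∑ i ∈ s, f i) ^ p := by
  classical
  induction s using Finset.induction_on with
  | empty => simp [Real.zero_rpow (by linarith : p ≠ 0)]
  | insert a s ha ih =>
    rw [sum_insert ha, sum_insert ha]
    have hfs : ∀ i ∈ s, 0 ≤ f i := fun i hi => hf i (mem_insert_of_mem hi)
    calc f a ^ p + ∑ i ∈ s, f i ^ p ≤ f a ^ p + (∑ i ∈ s, f i) ^ p := by gcongr; exact ih hfs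
      _ ≤ (f a + ∑ i ∈ s, f i) ^ p :=
        Real.add_rpow_le_rpow_add (hf a (mem_insert_self a s)) (sum_nonneg hfs) hp

theorem Real.sqrt_sum_sq_le_rpow_sum_rpow (hf : ∀ i ∈ s, 0 ≤ f i) {p : ℝ} (hp : 0 < p)
    (hp2 : p ≤ 2) :
    √(∑ i ∈ s, f i ^ 2) ≤ (∑ i ∈ s, f i ^ p) ^ (1 / p) := by
  have hS : 0 ≤ ∑ i ∈ s, f i ^ p := sum_nonneg fun i hi => Real.rpow_nonneg (hf i hi) p
  have key := s.sum_rpow_le_rpow_sum (f := fun i => f i ^ p)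
    (fun i hi => Real.rpow_nonneg (hf i hi) p) (p := 2 / p) (by rw [le_div_iff₀ hp]; linarith)
  have hsq : ∀ i ∈ s, (f i ^ p) ^ (2 / p) = f i ^ 2 := fun i hi => by
    rw [← Real.rpow_mul (hf i hi), mul_div_cancel₀ _ hp.ne', Real.rpow_two]
  rw [sum_congr rfl hsq] at key
  calc √(∑ i ∈ s, f i ^ 2) ≤ √((∑ i ∈ s, f i ^ p) ^ (2 / p)) := Real.sqrt_le_sqrt key
    _ = (∑ i ∈ s, f i ^ p) ^ (1 / p) := by
      rw [Real.sqrt_eq_rpow, ← Real.rpow_mul hS]; ring_nf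

theorem Real.sqrt_sum_sq_le_card_rpow_mul_rpow_sum_rpow (hf : ∀ i ∈ s, 0 ≤ f i) {p : ℝ}
    (hp : 2 ≤ p) :
    √(∑ i ∈ s, f i ^ 2) ≤ (#s : ℝ) ^ (1 / 2 - 1 / p) * (∑ i ∈ s, f i ^ p) ^ (1 / p) := by
  have hp0 : 0 < p := by linarith
  have hS : 0 ≤ ∑ i ∈ s, f i ^ p := sum_nonneg fun i hi => Real.rpow_nonneg (hf i hi) p
  have key := Real.rpow_sum_le_const_mul_sum_rpow_of_nonneg s (f := fun i => f i ^ 2)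
    (p := p / 2) (by linarith) (fun i _ => sq_nonneg _)
  have hpow : ∀ i ∈ s, (f i ^ 2) ^ (p / 2) = f i ^ p := fun i hi => by
    rw [← Real.rpow_two, ← Real.rpow_mul (hf i hi), mul_div_cancel₀ _ two_ne_zero]
  rw [sum_congr rfl hpow] at key
  calc √(∑ i ∈ s, f i ^ 2) = ((∑ i ∈ s, f i ^ 2) ^ (p / 2)) ^ (1 / p) := by
        rw [Real.sqrt_eq_rpow, ← Real.rpow_mul (sum_nonneg fun i _ => sq_nonneg _)]
        congr 1; field_simp
    _ ≤ ((#s : ℝ) ^ (p / 2 - 1) * ∑ i ∈ s, f i ^ p) ^ (1 / p) := by gcongr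
    _ = (#s : ℝ) ^ (1 / 2 - 1 / p) * (∑ i ∈ s, f i ^ p) ^ (1 / p) := by
        rw [Real.mul_rpow (by positivity) hS, ← Real.rpow_mul (by positivity)]
        congr 2; field_simp

end LpNorms

theorem Real.HolderConjugate.le_two_and_two_le {p q : ℝ} (h : p.HolderConjugate q)
    (hpq : p ≤ q) : p ≤ 2 ∧ 2 ≤ q := by
  have hinv := inv_anti₀ h.pos hpq
  have hsum := h.inv_add_inv_eq_one
  constructor
  · rw [← inv_le_inv₀ two_pos h.pos]; linarith
  · rw [← inv_le_inv₀ h.symm.pos two_pos]; linarith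

theorem Real.HolderConjugate.two_le_max {p q : ℝ} (h : p.HolderConjugate q) : 2 ≤ max p q := by
  rcases le_total p q with hpq | hqp
  · exact le_max_of_le_right (h.le_two_and_two_le hpq).2
  · exact le_max_of_le_left (h.symm.le_two_and_two_le hqp).2

theorem Real.sqrt_sum_sq_mul_sqrt_sum_sq_le {ι : Type*} (s : Finset ι) {f g : ι → ℝ}
    (hf : ∀ i ∈ s, 0 ≤ f i) (hg : ∀ i ∈ s, 0 ≤ g i) {p q : ℝ} (hpq : p.HolderConjugate q) :
    √(∑ i ∈ s, f i ^ 2) * √(∑ i ∈ s, g i ^ 2) ≤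
      (#s : ℝ) ^ (1 / 2 - 1 / max p q) * (∑ i ∈ s, f i ^ p) ^ (1 / p) *
        (∑ i ∈ s, g i ^ q) ^ (1 / q) := by
  wlog hle : p ≤ q generalizing p q f g
  · have := this hg hf hpq.symm (le_of_not_ge hle)
    rw [max_comm]
    linarith
  obtain ⟨hp2, hq2⟩ := hpq.le_two_and_two_le hle
  rw [max_eq_right hle]
  calc √(∑ i ∈ s, f i ^ 2) * √(∑ i ∈ s, g i ^ 2)
      ≤ (∑ i ∈ s, f i ^ p) ^ (1 / p) *
          ((#s : ℝ) ^ (1 / 2 - 1 / q) * (∑ i ∈ s, g i ^ q) ^ (1 / q)) := by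
        refine mul_le_mul (sqrt_sum_sq_le_rpow_sum_rpow s hf hpq.pos hp2)
          (sqrt_sum_sq_le_card_rpow_mul_rpow_sum_rpow s hg hq2) (Real.sqrt_nonneg _) ?_
        exact rpow_nonneg (sum_nonneg fun i hi => rpow_nonneg (hf i hi) p) _
    _ = _ := by ring

section InnerProductSpace

variable {E : Type*} [NormedAddCommGroup E] [InnerProductSpace ℝ E]

theorem Submodule.norm_sq_eq_sum_sq_inner_of_mem (F : Submodule ℝ E) [FiniteDimensional ℝ F]
    {x : E} (hx : x ∈ F) : ‖x‖ ^ 2 = ∑ t, ⟪(stdOrthonormalBasis ℝ F t : E), x⟫ ^ 2 :=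
  ((stdOrthonormalBasis ℝ F).sum_sq_inner_right ⟨x, hx⟩).symm

theorem Matrix.sqrt_sum_norm_sq_sum_smul_le {ι κ : Type*} [Fintype ι] [Fintype κ]
    (M : Matrix ι κ ℝ) {σ : ℝ} (hσ : 0 ≤ σ)
    (hM : ∀ x : κ → ℝ, √(∑ i, (∑ j, M i j * x j) ^ 2) ≤ σ * √(∑ j, x j ^ 2)) (v : κ → E) :
    √(∑ i, ‖∑ j, M i j • v j‖ ^ 2) ≤ σ * √(∑ j, ‖v j‖ ^ 2) := by
  set F := Submodule.span ℝ (Set.range v)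
  have hv : ∀ j, v j ∈ F := fun j => Submodule.subset_span (Set.mem_range_self j)
  have : FiniteDimensional ℝ F := FiniteDimensional.span_of_finite ℝ (Set.finite_range v)
  let b := stdOrthonormalBasis ℝ F
  have hMsq : ∀ x : κ → ℝ, ∑ i, (∑ j, M i j * x j) ^ 2 ≤ σ ^ 2 * ∑ j, x j ^ 2 := fun x => by
    have := pow_le_pow_left₀ (Real.sqrt_nonneg _) (hM x) 2
    rwa [mul_pow, Real.sq_sqrt (sum_nonneg fun _ _ => sq_nonneg _),
      Real.sq_sqrt (sum_nonneg fun _ _ => sq_nonneg _)] at this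
  have hcoord : ∀ i t, ⟪(b t : E), ∑ j, M i j • v j⟫ = ∑ j, M i j * ⟪(b t : E), v j⟫ :=
    fun i t => by simp only [inner_sum, real_inner_smul_right]
  have hsq : ∑ i, ‖∑ j, M i j • v j‖ ^ 2 ≤ σ ^ 2 * ∑ j, ‖v j‖ ^ 2 := calc
    ∑ i, ‖∑ j, M i j • v j‖ ^ 2 = ∑ t, ∑ i, (∑ j, M i j * ⟪(b t : E), v j⟫) ^ 2 := by
      rw [sum_comm]
      refine sum_congr rfl fun i _ => ?_
      rw [F.norm_sq_eq_sum_sq_inner_of_mem (sum_mem fun j _ => F.smul_mem _ (hv j))]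
      simp only [hcoord, b]
    _ ≤ ∑ t, σ ^ 2 * ∑ j, ⟪(b t : E), v j⟫ ^ 2 := sum_le_sum fun t _ => hMsq _
    _ = σ ^ 2 * ∑ j, ‖v j‖ ^ 2 := by
      rw [← mul_sum, sum_comm]
      simp only [F.norm_sq_eq_sum_sq_inner_of_mem (hv _), b]
  calc √(∑ i, ‖∑ j, M i j • v j‖ ^ 2) ≤ √(σ ^ 2 * ∑ j, ‖v j‖ ^ 2) := Real.sqrt_le_sqrt hsq
    _ = σ * √(∑ j, ‖v j‖ ^ 2) := by rw [Real.sqrt_mul (sq_nonneg σ), Real.sqrt_sq hσ]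

theorem Matrix.sum_sum_mul_inner_le {ι κ : Type*} [Fintype ι] [Fintype κ]
    (M : Matrix ι κ ℝ) {σ : ℝ} (hσ : 0 ≤ σ)
    (hM : ∀ x : κ → ℝ, √(∑ i, (∑ j, M i j * x j) ^ 2) ≤ σ * √(∑ j, x j ^ 2))
    (v : κ → E) (u : ι → E) :
    ∑ i, ∑ j, M i j * ⟪v j, u i⟫ ≤ σ * √(∑ j, ‖v j‖ ^ 2) * √(∑ i, ‖u i‖ ^ 2) := calc
  ∑ i, ∑ j, M i j * ⟪v j, u i⟫ = ∑ i, ⟪∑ j, M i j • v j, u i⟫ := by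
    simp only [sum_inner, real_inner_smul_left]
  _ ≤ ∑ i, ‖∑ j, M i j • v j‖ * ‖u i‖ := sum_le_sum fun i _ => real_inner_le_norm _ _
  _ ≤ √(∑ i, ‖∑ j, M i j • v j‖ ^ 2) * √(∑ i, ‖u i‖ ^ 2) := Real.sum_mul_le_sqrt_mul_sqrt _ _ _
  _ ≤ σ * √(∑ j, ‖v j‖ ^ 2) * √(∑ i, ‖u i‖ ^ 2) := by
    gcongr; exact M.sqrt_sum_norm_sq_sum_smul_le hσ hM v

theorem Matrix.finset_sum_sum_mul_inner_le {ι κ : Type*} [Fintype ι] [Fintype κ]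
    (M : Matrix ι κ ℝ) {σ : ℝ} (hσ : 0 ≤ σ)
    (hM : ∀ x : κ → ℝ, √(∑ i, (∑ j, M i j * x j) ^ 2) ≤ σ * √(∑ j, x j ^ 2))
    (S : Finset ι) (T : Finset κ) (v : κ → E) (u : ι → E) :
    ∑ i ∈ S, ∑ j ∈ T, M i j * ⟪v j, u i⟫ ≤
      σ * √(∑ j ∈ T, ‖v j‖ ^ 2) * √(∑ i ∈ S, ‖u i‖ ^ 2) := by
  classical
  have := M.sum_sum_mul_inner_le hσ hM (fun j => if j ∈ T then v j else 0)
    (fun i => if i ∈ S then u i else 0)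
  have hext : ∀ i j, M i j * ⟪if j ∈ T then v j else 0, if i ∈ S then u i else 0⟫ =
      if i ∈ S then (if j ∈ T then M i j * ⟪v j, u i⟫ else 0) else 0 := fun i j => by
    split_ifs <;> simp
  simp only [hext, sum_ite_irrel, sum_const_zero, sum_ite_mem, univ_inter] at this
  simpa only [apply_ite norm, norm_zero, ite_pow, ne_eq, OfNat.ofNat_ne_zero, not_false_eq_true,
    zero_pow, sum_ite_mem, univ_inter] using this

end InnerProductSpace

theorem ierk_quadratic_form_holder_general
    {E : Type*} [NormedAddCommGroup E] [InnerProductSpace ℝ E]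
    (s : ℕ) (M : Matrix (Fin s) (Fin s) ℝ)
    (hlow : ∀ i j : Fin s, i < j → M i j = 0)
    (σ : ℝ) (hσpos : 0 < σ)
    (hσ : ∀ x : Fin s → ℝ,
      Real.sqrt (∑ i, (∑ j, M i j * x j) ^ 2) ≤ σ * Real.sqrt (∑ i, (x i) ^ 2))
    (α β : ℝ) (hα : 1 < α) (hαβ : 1 / α + 1 / β = 1)
    (v u : Fin s → E) (k : ℕ) :
    ∑ i ∈ Finset.univ.filter (fun i : Fin s => (i : ℕ) < k),
        ∑ j ∈ Finset.Iic i, M i j * ⟪v j, u i⟫ ≤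
      (k : ℝ) ^ ((1 : ℝ) / 2 - 1 / max α β) * σ *
        (∑ i ∈ Finset.univ.filter (fun i : Fin s => (i : ℕ) < k), ‖v i‖ ^ α) ^ (1 / α) *
        (∑ i ∈ Finset.univ.filter (fun i : Fin s => (i : ℕ) < k), ‖u i‖ ^ β) ^ (1 / β) := by
  set T := Finset.univ.filter (fun i : Fin s => (i : ℕ) < k)
  have hconj : α.HolderConjugate β :=
    Real.holderConjugate_iff.2 ⟨hα, by simpa only [one_div] using hαβ⟩
  have htri : ∀ i ∈ T, ∑ j ∈ Iic i, M i j * ⟪v j, u i⟫ = ∑ j ∈ T, M i j * ⟪v j, u i⟫ := by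
    intro i hi
    refine sum_subset (fun j hj => ?_) (fun j _ hj => ?_)
    · simp only [T, mem_filter, mem_univ, true_and] at hi ⊢
      exact (Fin.le_iff_val_le_val.1 (mem_Iic.1 hj)).trans_lt hi
    · rw [hlow i j (lt_of_not_ge (mt mem_Iic.2 hj)), zero_mul]
  have hcard : #T ≤ k := Fin.card_filter_val_lt.trans_le (min_le_right s k)
  have hexp : 0 ≤ (1 : ℝ) / 2 - 1 / max α β :=
    sub_nonneg.2 (one_div_le_one_div_of_le two_pos hconj.two_le_max)
  rw [sum_congr rfl htri]
  calc ∑ i ∈ T, ∑ j ∈ T, M i j * ⟪v j, u i⟫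
      ≤ σ * (√(∑ j ∈ T, ‖v j‖ ^ 2) * √(∑ i ∈ T, ‖u i‖ ^ 2)) := by
        rw [← mul_assoc]; exact M.finset_sum_sum_mul_inner_le hσpos.le hσ T T v u
    _ ≤ σ * ((#T : ℝ) ^ ((1 : ℝ) / 2 - 1 / max α β) * (∑ i ∈ T, ‖v i‖ ^ α) ^ (1 / α) *
          (∑ i ∈ T, ‖u i‖ ^ β) ^ (1 / β)) := by
        refine mul_le_mul_of_nonneg_left ?_ hσpos.le
        exact Real.sqrt_sum_sq_mul_sqrt_sum_sq_le T (fun i _ => norm_nonneg _)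
          (fun i _ => norm_nonneg _) hconj
    _ ≤ (k : ℝ) ^ ((1 : ℝ) / 2 - 1 / max α β) * σ * (∑ i ∈ T, ‖v i‖ ^ α) ^ (1 / α) *
          (∑ i ∈ T, ‖u i‖ ^ β) ^ (1 / β) := by
        rw [← mul_assoc, ← mul_assoc, mul_comm σ]
        gcongr

/-- Part (iii) of the quadratic-form lemma (Lemma 2.2): the convolution-type Hölder
inequality for a lower triangular matrix with spectral norm at most `σ`. -/
theorem ierk_quadratic_form_holder
    {E : Type*} [NormedAddCommGroup E] [InnerProductSpace ℝ E]
    (s : ℕ) (hs : 1 ≤ s) (M : Matrix (Fin s) (Fin s) ℝ)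
    (hlow : ∀ i j : Fin s, i < j → M i j = 0)
    (σ : ℝ) (hσpos : 0 < σ)
    (hσ : ∀ x : Fin s → ℝ,
      Real.sqrt (∑ i, (∑ j, M i j * x j) ^ 2) ≤ σ * Real.sqrt (∑ i, (x i) ^ 2))
    (α β : ℝ) (hα : 1 < α) (hβ : 1 < β) (hαβ : 1 / α + 1 / β = 1)
    (v u : Fin s → E) (k : ℕ) (hk1 : 1 ≤ k) (hks : k ≤ s) :
    ∑ i ∈ Finset.univ.filter (fun i : Fin s => (i : ℕ) < k),
        ∑ j ∈ Finset.Iic i, M i j * ⟪v j, u i⟫ ≤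
      (k : ℝ) ^ ((1 : ℝ) / 2 - 1 / max α β) * σ *
        (∑ i ∈ Finset.univ.filter (fun i : Fin s => (i : ℕ) < k), ‖v i‖ ^ α) ^ (1 / α) *
        (∑ i ∈ Finset.univ.filter (fun i : Fin s => (i : ℕ) < k), ‖u i‖ ^ β) ^ (1 / β) :=
  ierk_quadratic_form_holder_general s M hlow σ hσpos hσ α β hα hαβ v u k
end

section
/- Let s > 1 and N ≥ 1 be integers, let 0 = t₀ < t₁ < ⋯ < t_N be time levels with steps τ_n = t_n − t_{n−1}, and let v_{n,i} ≥ 0 be a nonnegative discrete function defined for 1 ≤ n ≤ N and 1 ≤ i ≤ s satisfying the compatibility v_{n,s} = v_{n+1,1} for 1 ≤ n < N; write v₀ := v_{1,1}. Suppose there exist constants ξ > 0 and c_g > 0 such that (1 + 2 ξ τ_n) v_{n,i} ≤ v_{n,1} + c_g τ_n for every 1 ≤ n ≤ N and every 2 ≤ i ≤ s, and suppose the maximum step size satisfies max_n τ_n ≤ 1/ξ. Then v_{m,i} ≤ e^{−ξ t_m} v₀ + c_g/ξ for every 1 ≤ m ≤ N and every 2 ≤ i ≤ s. -/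
/-!
Each step damps the first stage: with `x = ξ τ_n ∈ [0, 1]` one has `e^x ≤ 1 + 2x`, so dividing the
stage inequality by `1 + 2x` multiplies the decaying part of the bound by at most `e^{-ξ τ_n}` and
keeps the constant part `c_g / ξ` fixed. Through the compatibility `v_{n,s} = v_{n+1,1}` the bound
on the stages of step `n` becomes the bound on the first stage of step `n + 1`, and the factors
`e^{-ξ τ_k}` multiply up to `e^{-ξ t_m}`.
-/

open Real

theorem Real.exp_le_one_add_two_mul {x : ℝ} (hx0 : 0 ≤ x) (hx1 : x ≤ 1) :
    exp x ≤ 1 + 2 * x := by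
  have h := Real.abs_exp_sub_one_le (x := x) (by rwa [abs_of_nonneg hx0])
  rw [abs_of_nonneg hx0] at h
  linarith [le_abs_self (exp x - 1)]

theorem le_exp_neg_mul_add_of_damped_step {ξ τ c a u w : ℝ} (hξ : 0 < ξ) (hτ : 0 ≤ τ)
    (hξτ : ξ * τ ≤ 1) (hc : 0 ≤ c) (ha : 0 ≤ a)
    (hstep : (1 + 2 * ξ * τ) * w ≤ u + c * τ) (hu : u ≤ a + c / ξ) :
    w ≤ exp (-(ξ * τ)) * a + c / ξ := by
  have hx : 0 ≤ ξ * τ := mul_nonneg hξ.le hτ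
  have hdamp : 1 ≤ exp (-(ξ * τ)) * (1 + 2 * ξ * τ) := by
    calc (1 : ℝ) = exp (-(ξ * τ)) * exp (ξ * τ) := by rw [← exp_add, neg_add_cancel, exp_zero]
      _ ≤ exp (-(ξ * τ)) * (1 + 2 * ξ * τ) := by
        rw [mul_assoc 2]
        exact mul_le_mul_of_nonneg_left (exp_le_one_add_two_mul hx hξτ) (exp_pos _).le
  have hcτ : c * τ = c / ξ * (ξ * τ) := by field_simp
  have hc' : 0 ≤ c / ξ * (ξ * τ) := by positivity
  refine le_of_mul_le_mul_left ?_ (by positivity : (0 : ℝ) < 1 + 2 * ξ * τ)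
  nlinarith [mul_le_mul_of_nonneg_right hdamp ha]

theorem damping_discrete_gronwall_multistage_general
    (s N : ℕ) (hs : 1 < s)
    (t : ℕ → ℝ) (ht0 : t 0 = 0) (htmono : ∀ n, n < N → t n < t (n + 1))
    (v : ℕ → ℕ → ℝ)
    (hvnonneg : ∀ n i, 1 ≤ n → n ≤ N → 1 ≤ i → i ≤ s → 0 ≤ v n i)
    (hcompat : ∀ n, 1 ≤ n → n < N → v n s = v (n + 1) 1)
    (ξ cg : ℝ) (hξ : 0 < ξ) (hcg : 0 < cg)
    (hstep : ∀ n i, 1 ≤ n → n ≤ N → 2 ≤ i → i ≤ s →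
      (1 + 2 * ξ * (t n - t (n - 1))) * v n i ≤ v n 1 + cg * (t n - t (n - 1)))
    (hmax : ∀ n, 1 ≤ n → n ≤ N → t n - t (n - 1) ≤ 1 / ξ) :
    ∀ m i, 1 ≤ m → m ≤ N → 2 ≤ i → i ≤ s →
      v m i ≤ Real.exp (-ξ * t m) * v 1 1 + cg / ξ := by
  intro m i hm hmN hi his
  have hv0 : 0 ≤ v 1 1 := hvnonneg 1 1 le_rfl (hm.trans hmN) le_rfl hs.le
  have advance : ∀ n i, 1 ≤ n → n ≤ N → 2 ≤ i → i ≤ s →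
      v n 1 ≤ exp (-ξ * t (n - 1)) * v 1 1 + cg / ξ →
      v n i ≤ exp (-ξ * t n) * v 1 1 + cg / ξ := by
    intro n i hn hnN hi his hfirst
    have hτ : t (n - 1) < t n := by
      simpa [Nat.sub_add_cancel hn] using htmono (n - 1) (by omega)
    have hξτ : ξ * (t n - t (n - 1)) ≤ 1 := by
      simpa [mul_comm] using (le_div_iff₀ hξ).1 (hmax n hn hnN)
    have h := le_exp_neg_mul_add_of_damped_step hξ (sub_nonneg.2 hτ.le) hξτ hcg.le
      (by positivity) (hstep n i hn hnN hi his) hfirst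
    rwa [← mul_assoc, ← exp_add, show -(ξ * (t n - t (n - 1))) + -ξ * t (n - 1) = -ξ * t n by ring]
      at h
  have first : ∀ n, 1 ≤ n → n ≤ N → v n 1 ≤ exp (-ξ * t (n - 1)) * v 1 1 + cg / ξ := by
    intro n hn
    induction n, hn using Nat.le_induction with
    | base => simp [ht0, hcg.le, hξ.le, div_nonneg]
    | succ n hn ih =>
      intro hnN
      rw [← hcompat n hn (by omega), Nat.add_sub_cancel]
      exact advance n s hn (by omega) hs le_rfl (ih (by omega))
  exact advance m i hm hmN hi his (first m hm hmN)

/-- Damping-type discrete Grönwall inequality for multi-stage Runge–Kutta methods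
(Lemma 2.3 of the paper). -/
theorem damping_discrete_gronwall_multistage
    (s N : ℕ) (hs : 1 < s) (hN : 1 ≤ N)
    (t : ℕ → ℝ) (ht0 : t 0 = 0) (htmono : ∀ n, n < N → t n < t (n + 1))
    (v : ℕ → ℕ → ℝ)
    (hvnonneg : ∀ n i, 1 ≤ n → n ≤ N → 1 ≤ i → i ≤ s → 0 ≤ v n i)
    (hcompat : ∀ n, 1 ≤ n → n < N → v n s = v (n + 1) 1)
    (ξ cg : ℝ) (hξ : 0 < ξ) (hcg : 0 < cg)
    (hstep : ∀ n i, 1 ≤ n → n ≤ N → 2 ≤ i → i ≤ s →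
      (1 + 2 * ξ * (t n - t (n - 1))) * v n i ≤ v n 1 + cg * (t n - t (n - 1)))
    (hmax : ∀ n, 1 ≤ n → n ≤ N → t n - t (n - 1) ≤ 1 / ξ) :
    ∀ m i, 1 ≤ m → m ≤ N → 2 ≤ i → i ≤ s →
      v m i ≤ Real.exp (-ξ * t m) * v 1 1 + cg / ξ :=
  damping_discrete_gronwall_multistage_general s N hs t ht0 htmono v hvnonneg hcompat ξ cg hξ hcg
    hstep hmax
end

section
/- Let 0 < δ ≤ 1/2, let k ≥ 1 be an integer, and let a₁, …, a_k be nonnegative real numbers. Then Σ_{i=1}^{k} (Σ_{ℓ=1}^{i} a_ℓ^{δ})⁴ ≤ (1 − 2δ) k⁵ + 2 δ k⁴ Σ_{ℓ=1}^{k} a_ℓ². -/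
/-!
By the power-mean inequality, `(∑_{ℓ ≤ i} a_ℓ^δ)⁴ ≤ i³ ∑_{ℓ ≤ i} a_ℓ^{4δ}`, and since `4δ = 2 · (2δ)`
with `0 ≤ 2δ ≤ 1`, Bernoulli's inequality gives `a^{4δ} = (a²)^{2δ} ≤ (1 - 2δ) + 2δ a²`.
Bounding every `i` and every partial sum of `a_ℓ²` by `k` and the full sum then bounds each of the
`k` terms by `k³ ((1 - 2δ) k + 2δ ∑ a_ℓ²)`.
-/

open Finset

theorem Real.rpow_pow_four_le_one_sub_add_mul_sq {x δ : ℝ} (hx : 0 ≤ x) (hδ0 : 0 ≤ δ)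
    (hδ : δ ≤ 1 / 2) : (x ^ δ) ^ 4 ≤ 1 - 2 * δ + 2 * δ * x ^ 2 := by
  have hpow : (x ^ δ) ^ 4 = (1 + (x ^ 2 - 1)) ^ (2 * δ) := by
    rw [add_sub_cancel, ← Real.rpow_natCast_mul hx, ← Real.rpow_mul_natCast hx]
    push_cast
    ring_nf
  rw [hpow]
  have hbernoulli := rpow_one_add_le_one_add_mul_self (s := x ^ 2 - 1) (by nlinarith [sq_nonneg x])
    (by linarith : 0 ≤ 2 * δ) (by linarith : 2 * δ ≤ 1)
  linarith

theorem Finset.sum_rpow_pow_four_le {ι : Type*} (s : Finset ι) (a : ι → ℝ) (ha : ∀ i ∈ s, 0 ≤ a i)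
    {δ : ℝ} (hδ0 : 0 ≤ δ) (hδ : δ ≤ 1 / 2) :
    (∑ i ∈ s, a i ^ δ) ^ 4 ≤
      (#s : ℝ) ^ 3 * ((1 - 2 * δ) * #s + 2 * δ * ∑ i ∈ s, a i ^ 2) :=
  calc (∑ i ∈ s, a i ^ δ) ^ 4
      ≤ (#s : ℝ) ^ 3 * ∑ i ∈ s, (a i ^ δ) ^ 4 :=
        pow_sum_le_card_mul_sum_pow (fun i hi => Real.rpow_nonneg (ha i hi) δ) 3
    _ ≤ (#s : ℝ) ^ 3 * ∑ i ∈ s, (1 - 2 * δ + 2 * δ * a i ^ 2) := by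
        gcongr with i hi
        exact Real.rpow_pow_four_le_one_sub_add_mul_sq (ha i hi) hδ0 hδ
    _ = (#s : ℝ) ^ 3 * ((1 - 2 * δ) * #s + 2 * δ * ∑ i ∈ s, a i ^ 2) := by
        rw [sum_add_distrib, sum_const, nsmul_eq_mul, ← mul_sum]
        ring

theorem chained_power_mean_inequality_general
    (δ : ℝ) (hδ0 : 0 < δ) (hδ : δ ≤ 1 / 2) (k : ℕ)
    (a : ℕ → ℝ) (ha : ∀ i, 0 ≤ a i) :
    ∑ i ∈ Finset.range k, (∑ l ∈ Finset.range (i + 1), a l ^ δ) ^ 4 ≤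
      (1 - 2 * δ) * (k : ℝ) ^ 5 + 2 * δ * (k : ℝ) ^ 4 * ∑ l ∈ Finset.range k, a l ^ 2 := by
  have hterm : ∀ i ∈ range k, (∑ l ∈ range (i + 1), a l ^ δ) ^ 4 ≤
      (k : ℝ) ^ 3 * ((1 - 2 * δ) * k + 2 * δ * ∑ l ∈ range k, a l ^ 2) := by
    intro i hi
    have hik : i + 1 ≤ k := mem_range.mp hi
    have hcard : ((#(range (i + 1)) : ℕ) : ℝ) ≤ k := by rw [card_range]; exact_mod_cast hik
    have hsq : ∑ l ∈ range (i + 1), a l ^ 2 ≤ ∑ l ∈ range k, a l ^ 2 :=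
      sum_le_sum_of_subset_of_nonneg (range_subset_range.mpr hik) fun l _ _ => sq_nonneg (a l)
    have h2δ : 0 ≤ 1 - 2 * δ := by linarith
    refine (sum_rpow_pow_four_le _ a (fun l _ => ha l) hδ0.le hδ).trans ?_
    gcongr
  calc ∑ i ∈ range k, (∑ l ∈ range (i + 1), a l ^ δ) ^ 4
      ≤ ∑ _i ∈ range k, (k : ℝ) ^ 3 * ((1 - 2 * δ) * k + 2 * δ * ∑ l ∈ range k, a l ^ 2) :=
        sum_le_sum hterm
    _ = (1 - 2 * δ) * (k : ℝ) ^ 5 + 2 * δ * (k : ℝ) ^ 4 * ∑ l ∈ range k, a l ^ 2 := by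
        rw [sum_const, card_range, nsmul_eq_mul]
        ring

/-- The chained power-mean inequality from the proof of the H¹ nonlinear convection
bound (Lemma 3.2 in the supplementary material):
`∑_{i=1}^{k} (∑_{ℓ=1}^{i} a_ℓ^δ)⁴ ≤ (1 − 2δ) k⁵ + 2δ k⁴ ∑_{ℓ=1}^{k} a_ℓ²`
for `0 < δ ≤ 1/2` and nonnegative `a_ℓ`. -/
theorem chained_power_mean_inequality
    (δ : ℝ) (hδ0 : 0 < δ) (hδ : δ ≤ 1 / 2) (k : ℕ) (hk : 1 ≤ k)
    (a : ℕ → ℝ) (ha : ∀ i, 0 ≤ a i) :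
    ∑ i ∈ Finset.range k, (∑ l ∈ Finset.range (i + 1), a l ^ δ) ^ 4 ≤
      (1 - 2 * δ) * (k : ℝ) ^ 5 + 2 * δ * (k : ℝ) ^ 4 * ∑ l ∈ Finset.range k, a l ^ 2 :=
  chained_power_mean_inequality_general δ hδ0 hδ k a ha
end

section
/- Let c₂ be a real number with either 3/25 ≤ c₂ ≤ 43/100 or 29/25 ≤ c₂ ≤ 429/100. Then the symmetric part of the 2×2 real matrix M(c₂) = [[c₂, 0], [(2c₂² − 2c₂ + 1)/(2 − 2c₂), (1 − 2c₂)/(2 − 2c₂)]] is positive definite, i.e. xᵀ (M(c₂) + M(c₂)ᵀ)/2 x > 0 for all nonzero x ∈ ℝ². -/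
/-!
The quadratic form of the symmetric part of a matrix is the quadratic form of the matrix itself,
so for `M = !![a, b; c, d]` it is `a u² + (b + c) u v + d v²`. Completing the square, this binary
form is positive definite as soon as `a > 0` and `(b + c)² < 4 a d`. For the IERK(2,3;c₂)
matrix the second condition, cleared of the denominator `(2 - 2c₂)²`, is positivity of a
quartic in `c₂`.
-/

open Matrix

theorem Matrix.dotProduct_half_add_transpose_mulVec {n R : Type*} [Fintype n] [Field R]
    [NeZero (2 : R)] (A : Matrix n n R) (x : n → R) :
    x ⬝ᵥ ((1 / 2 : R) • (A + Aᵀ)) *ᵥ x = x ⬝ᵥ A *ᵥ x := by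
  rw [smul_mulVec, dotProduct_smul, add_mulVec, dotProduct_add, dotProduct_transpose_mulVec,
    smul_eq_mul, ← two_mul, one_div, inv_mul_cancel_left₀ two_ne_zero]

theorem Matrix.dotProduct_mulVec_fin_two {R : Type*} [CommRing R] (a b c d : R) (x : Fin 2 → R) :
    x ⬝ᵥ !![a, b; c, d] *ᵥ x = a * x 0 ^ 2 + (b + c) * (x 0 * x 1) + d * x 1 ^ 2 := by
  simp only [dotProduct, mulVec, Fin.sum_univ_two, of_apply, cons_val', cons_val_zero,
    cons_val_one, empty_val', cons_val_fin_one]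
  ring

theorem binary_quadratic_form_pos {K : Type*} [Field K] [LinearOrder K] [IsStrictOrderedRing K]
    {a b d : K} (ha : 0 < a) (hdisc : b ^ 2 < 4 * a * d) {u v : K} (huv : u ≠ 0 ∨ v ≠ 0) :
    0 < a * u ^ 2 + b * (u * v) + d * v ^ 2 := by
  have hsq : 4 * a * (a * u ^ 2 + b * (u * v) + d * v ^ 2)
      = (2 * a * u + b * v) ^ 2 + (4 * a * d - b ^ 2) * v ^ 2 := by ring
  refine pos_of_mul_pos_right (hsq ▸ ?_) (by positivity : (0 : K) ≤ 4 * a)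
  rcases eq_or_ne v 0 with rfl | hv
  · have hu : u ≠ 0 := huv.resolve_right (not_not.2 rfl)
    simp only [mul_zero, add_zero]
    positivity
  · have : 0 < (4 * a * d - b ^ 2) * v ^ 2 := mul_pos (sub_pos.2 hdisc) (by positivity)
    positivity

theorem Matrix.dotProduct_mulVec_fin_two_pos {K : Type*} [Field K] [LinearOrder K]
    [IsStrictOrderedRing K] {a b c d : K} (ha : 0 < a) (hdisc : (b + c) ^ 2 < 4 * a * d)
    {x : Fin 2 → K} (hx : x ≠ 0) : 0 < x ⬝ᵥ !![a, b; c, d] *ᵥ x := by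
  rw [dotProduct_mulVec_fin_two]
  refine binary_quadratic_form_pos ha hdisc ?_
  by_contra! h
  exact hx (funext (Fin.forall_fin_two.2 h))

/-- The roots of this quartic are `0.116337…, 0.434174…, 1.15161…, 4.29788…`; the intervals
lie strictly inside the two ranges where it is positive. -/
theorem ierk23_quartic_pos {c : ℝ}
    (h : (3 / 25 ≤ c ∧ c ≤ 43 / 100) ∨ (29 / 25 ≤ c ∧ c ≤ 429 / 100)) :
    0 < -4 * c ^ 4 + 24 * c ^ 3 - 32 * c ^ 2 + 12 * c - 1 := by
  rcases h with ⟨h1, h2⟩ | ⟨h1, h2⟩ <;>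
    nlinarith [mul_nonneg (sub_nonneg.2 h1) (sub_nonneg.2 h2),
      mul_nonneg (mul_nonneg (sub_nonneg.2 h1) (sub_nonneg.2 h2)) (sub_nonneg.2 h1),
      mul_nonneg (mul_nonneg (sub_nonneg.2 h1) (sub_nonneg.2 h2)) (sub_nonneg.2 h2)]

theorem ierk23_sq_lt {c : ℝ}
    (h : (3 / 25 ≤ c ∧ c ≤ 43 / 100) ∨ (29 / 25 ≤ c ∧ c ≤ 429 / 100)) :
    (0 + (2 * c ^ 2 - 2 * c + 1) / (2 - 2 * c)) ^ 2 < 4 * c * ((1 - 2 * c) / (2 - 2 * c)) := by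
  have hc : 1 - c ≠ 0 := by rcases h with ⟨_, _⟩ | ⟨_, _⟩ <;> intro <;> linarith
  have hdiff : 4 * c * ((1 - 2 * c) / (2 - 2 * c)) - (0 + (2 * c ^ 2 - 2 * c + 1) / (2 - 2 * c)) ^ 2
      = (-4 * c ^ 4 + 24 * c ^ 3 - 32 * c ^ 2 + 12 * c - 1) / (4 * (1 - c) ^ 2) := by
    field_simp
    ring
  have hden : 0 < 4 * (1 - c) ^ 2 := mul_pos four_pos (sq_pos_of_ne_zero hc)
  exact sub_pos.1 (hdiff ▸ div_pos (ierk23_quartic_pos h) hden)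

/-- For `c₂` in the stated intervals, the symmetric part of the difference
coefficient matrix `E₂⁻¹ A_I` of the IERK(2,3;c₂) method is positive definite. -/
theorem IERK23_symmetric_part_posDef (c₂ : ℝ)
    (h : (3 / 25 ≤ c₂ ∧ c₂ ≤ 43 / 100) ∨ (29 / 25 ≤ c₂ ∧ c₂ ≤ 429 / 100)) :
    let M : Matrix (Fin 2) (Fin 2) ℝ :=
      !![c₂, 0;
         (2 * c₂ ^ 2 - 2 * c₂ + 1) / (2 - 2 * c₂), (1 - 2 * c₂) / (2 - 2 * c₂)]
    ∀ x : Fin 2 → ℝ, x ≠ 0 → 0 < x ⬝ᵥ (((1 : ℝ) / 2) • (M + Mᵀ)).mulVec x := by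
  intro M x hx
  have hc₂ : 0 < c₂ := by rcases h with ⟨_, _⟩ | ⟨_, _⟩ <;> linarith
  rw [dotProduct_half_add_transpose_mulVec]
  exact dotProduct_mulVec_fin_two_pos hc₂ (ierk23_sq_lt h) hx
end

section
/- Let a₅₅ be a real number with 63/100 ≤ a₅₅ ≤ 21/10. Let A_I be the 4×4 lower triangular matrix with rows (1, 0, 0, 0), (−3/10, 4/5, 0, 0), (−367/250, 196/125, 4/5, 0), (−2(36a₅₅ − 5)/147, (75a₅₅ + 598)/588, −25(15a₅₅ + 2)/588, a₅₅), and let E₄ be the 4×4 lower triangular matrix all of whose entries on and below the diagonal equal 1. Then the symmetric part (M + Mᵀ)/2 of M := E₄⁻¹A_I is positive definite. -/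
/-!
`E₄⁻¹` is the backward-difference matrix, so `M = E₄⁻¹ A_I` is explicit and affine in `a₅₅`.
Its symmetric part factors as `Uᵀ D U` with `U` unit upper triangular (an `LDLᵀ` factorization):
the first three pivots are positive constants and the last one is a concave quadratic in `a₅₅`
with roots `≈ 0.626214` and `≈ 2.10996`, hence positive on `[63/100, 21/10]`. A congruence by an
invertible matrix preserves positive definiteness.
-/

open Matrix

namespace Matrix

def lowerTriangularOnes (R : Type*) [Zero R] [One R] (n : ℕ) : Matrix (Fin n) (Fin n) R :=
  fun i j => if j ≤ i then 1 else 0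

def backwardDiff (R : Type*) [Zero R] [One R] [Neg R] (n : ℕ) : Matrix (Fin n) (Fin n) R :=
  fun i j => if i = j then 1 else if j.val + 1 = i.val then -1 else 0

theorem backwardDiff_mul_lowerTriangularOnes (R : Type*) [Ring R] (n : ℕ) :
    backwardDiff R n * lowerTriangularOnes R n = 1 := by
  ext i j
  have hsplit : ∀ k, backwardDiff R n i k =
      (if i = k then 1 else 0) - (if k.val + 1 = i.val then 1 else 0) := by
    intro k
    unfold backwardDiff
    split_ifs <;> simp_all
  have hprev : (∑ k, if k.val + 1 = i.val then lowerTriangularOnes R n k j else 0) =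
      if j < i then 1 else 0 := by
    rcases i with ⟨_ | m, hi⟩
    · simp [Fin.lt_def]
    · have hother : ∀ k : Fin n, k ≠ ⟨m, by omega⟩ → ¬k.val + 1 = m + 1 :=
        fun k hk h => hk (Fin.ext (by simp only at h ⊢; omega))
      rw [Finset.sum_eq_single ⟨m, by omega⟩ (fun k _ hk => if_neg (hother k hk)) (by simp)]
      simp [lowerTriangularOnes, Fin.lt_def, Fin.le_def]
  simp only [mul_apply, hsplit, sub_mul, Finset.sum_sub_distrib, ite_mul, one_mul, zero_mul,
    Finset.sum_ite_eq, Finset.mem_univ, if_true]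
  rw [hprev]
  simp only [lowerTriangularOnes, one_apply, Fin.le_iff_val_le_val, Fin.lt_def, Fin.ext_iff]
  split_ifs <;> first | (exfalso; omega) | simp

theorem inv_lowerTriangularOnes (R : Type*) [CommRing R] (n : ℕ) :
    (lowerTriangularOnes R n)⁻¹ = backwardDiff R n :=
  inv_eq_left_inv (backwardDiff_mul_lowerTriangularOnes R n)

end Matrix

namespace IERK35

noncomputable section

def implicitCoeff (a : ℝ) : Matrix (Fin 4) (Fin 4) ℝ :=
  !![1, 0, 0, 0;
     -3 / 10, 4 / 5, 0, 0;
     -367 / 250, 196 / 125, 4 / 5, 0;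
     -2 * (36 * a - 5) / 147, (75 * a + 598) / 588, -25 * (15 * a + 2) / 588, a]

def diffCoeff (a : ℝ) : Matrix (Fin 4) (Fin 4) ℝ :=
  !![1, 0, 0, 0;
     -13 / 10, 4 / 5, 0, 0;
     -146 / 125, 96 / 125, 4 / 5, 0;
     56449 / 36750 - 24 / 49 * a, -20249 / 36750 + 25 / 196 * a, -1301 / 1470 - 125 / 196 * a, a]

theorem backwardDiff_mul_implicitCoeff (a : ℝ) :
    backwardDiff ℝ 4 * implicitCoeff a = diffCoeff a := by
  ext i j
  fin_cases i <;> fin_cases j <;>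
    simp [backwardDiff, implicitCoeff, diffCoeff, mul_apply, Fin.sum_univ_four] <;> ring

def ldlFactor (a : ℝ) : Matrix (Fin 4) (Fin 4) ℝ :=
  !![1, -13 / 20, -73 / 125, 56449 / 73500 - 12 / 49 * a;
     0, 1, 44 / 3775, 109619 / 184975 - 1870 / 7399 * a;
     0, 0, 1, 62807 / 8488368 - 17046775 / 16976736 * a;
     0, 0, 0, 1]

def lastPivot (a : ℝ) : ℝ :=
  (-4807787164 + 9956163548 * a - 3638722951 * a ^ 2) / 6654880512

def ldlPivots (a : ℝ) : Fin 4 → ℝ := ![1, 151 / 400, 43308 / 94375, lastPivot a]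

theorem symmPart_diffCoeff (a : ℝ) :
    (1 / 2 : ℝ) • (diffCoeff a + (diffCoeff a)ᵀ) =
      (ldlFactor a)ᵀ * diagonal (ldlPivots a) * ldlFactor a := by
  ext i j
  fin_cases i <;> fin_cases j <;>
    simp [diffCoeff, ldlFactor, ldlPivots, lastPivot, mul_apply, Fin.sum_univ_four] <;> ring

theorem lastPivot_pos {a : ℝ} (ha1 : 63 / 100 ≤ a) (ha2 : a ≤ 21 / 10) : 0 < lastPivot a := by
  unfold lastPivot
  nlinarith [mul_nonneg (sub_nonneg.mpr ha1) (sub_nonneg.mpr ha2)]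

theorem det_ldlFactor (a : ℝ) : (ldlFactor a).det = 1 := by
  rw [det_of_isUpperTriangular]
  · simp [ldlFactor, Fin.prod_univ_four]
  · intro i j hij
    fin_cases i <;> fin_cases j <;> simp_all [ldlFactor]

theorem posDef_symmPart_diffCoeff {a : ℝ} (ha1 : 63 / 100 ≤ a) (ha2 : a ≤ 21 / 10) :
    ((1 / 2 : ℝ) • (diffCoeff a + (diffCoeff a)ᵀ)).PosDef := by
  have hpivots : ∀ i, 0 < ldlPivots a i := by
    intro i
    fin_cases i <;> norm_num [ldlPivots, lastPivot_pos ha1 ha2]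
  have hinj : Function.Injective (ldlFactor a).mulVec :=
    mulVec_injective_iff_isUnit.2 <| (isUnit_iff_isUnit_det _).2 <| by simp [det_ldlFactor]
  rw [symmPart_diffCoeff, ← conjTranspose_eq_transpose_of_trivial]
  exact (PosDef.diagonal hpivots).conjTranspose_mul_mul_same hinj

end

end IERK35

/-- For `63/100 ≤ a₅₅ ≤ 21/10`, the symmetric part of the difference coefficient
matrix `E₄⁻¹ A_I` of the IERK(3,5;a₅₅) method is positive definite. -/
theorem IERK35_symmetric_part_posDef (a : ℝ) (ha1 : 63 / 100 ≤ a) (ha2 : a ≤ 21 / 10) :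
    let AI : Matrix (Fin 4) (Fin 4) ℝ :=
      !![1, 0, 0, 0;
         -3 / 10, 4 / 5, 0, 0;
         -367 / 250, 196 / 125, 4 / 5, 0;
         -2 * (36 * a - 5) / 147, (75 * a + 598) / 588, -25 * (15 * a + 2) / 588, a]
    let E : Matrix (Fin 4) (Fin 4) ℝ := fun i j => if j ≤ i then 1 else 0
    let M : Matrix (Fin 4) (Fin 4) ℝ := E⁻¹ * AI
    ∀ x : Fin 4 → ℝ, x ≠ 0 → 0 < x ⬝ᵥ (((1 : ℝ) / 2) • (M + Mᵀ)).mulVec x := by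
  intro AI E M x hx
  have hM : M = IERK35.diffCoeff a := by
    rw [← IERK35.backwardDiff_mul_implicitCoeff, ← inv_lowerTriangularOnes]
    rfl
  rw [hM]
  simpa using (IERK35.posDef_symmPart_diffCoeff ha1 ha2).dotProduct_mulVec_pos hx
end
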